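/- For every real m > 0, set k = −1/√3 and define σ_m(ρ) = −3/(2√(V_m(ρ))) + V_m'(ρ)/(4V_m(ρ)) + 1/ρ on (ρ₊(m), ∞). Then θ_m and β_m are differentiable on (ρ₊(m), ∞) and satisfy, for all ρ > ρ₊(m): θ_m'(ρ) = σ_m(ρ)·((k/β_m(ρ))·(k·θ_m(ρ) − 1) + θ_m(ρ)·((θ_m(ρ) + k)² − 4/3)) and β_m'(ρ) = σ_m(ρ)·(2/3 − β_m(ρ)·((θ_m(ρ) + k)² + 2/3)). (Equivalently: in the self-similar coordinate s with ds/dρ = σ_m(ρ), the pair (θ_m, β_m) is an orbit of the autonomous system dθ/ds = (k/β)(kθ − 1) + θ((θ + k)² − (1 + k²)), dβ/ds = 1 − k² − β((θ + k)² + (1 − k²)) with k² = 1/3; this identifies the Lorentzian Hawking–Page solution with an orbit of the reduced system.) -/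

import Mathlib

/-!
Write `s = √(V_m(ρ))`. Since `m = ρ(ρ² + 1 − s²)/2`, the quantities `θ_m/√3`, `β_m` and `σ_m` are
rational functions of `(ρ, s)` alone, and `s` itself solves `s' = (3ρ² + 1 − s²)/(2ρs)`.
The orbit equations then reduce to two rational identities in `(ρ, s)`; the constant `√3`
only enters through `(√3 u − 1/√3)² = (3u − 1)²/3` for `u = θ_m/√3`.
-/

noncomputable def Vhp (m ρ : ℝ) : ℝ := ρ ^ 2 + 1 - 2 * m / ρ

noncomputable def Vhp' (m ρ : ℝ) : ℝ := 2 * ρ + 2 * m / ρ ^ 2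

/-- `β_m`, the renormalized self-similar quantity of the Lorentzian Hawking–Page solution. -/
noncomputable def betaHP (m ρ : ℝ) : ℝ :=
  (1 / 3) * (3 / 2 - Real.sqrt (Vhp m ρ) / ρ - Vhp' m ρ / (4 * Real.sqrt (Vhp m ρ)))

/-- `θ_m`, for the + sign of the scalar field (`k = −1/√3`). -/
noncomputable def thetaHP (m ρ : ℝ) : ℝ :=
  Real.sqrt 3 * ρ * (Vhp' m ρ - 2 * Real.sqrt (Vhp m ρ)) /
    (4 * Vhp m ρ + ρ * Vhp' m ρ - 6 * ρ * Real.sqrt (Vhp m ρ))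

/-- `σ_m = ds/dρ`, the derivative of the self-similar coordinate `s` with respect to `ρ`. -/
noncomputable def sigmaHP (m ρ : ℝ) : ℝ :=
  -3 / (2 * Real.sqrt (Vhp m ρ)) + Vhp' m ρ / (4 * Vhp m ρ) + 1 / ρ

namespace HawkingPage

open Filter

/-- `θ_m / √3` as a function of `ρ` and `s = √(V_m(ρ))`. -/
noncomputable def thetaRat (ρ s : ℝ) : ℝ :=
  (3 * ρ ^ 2 + 1 - s ^ 2 - 2 * ρ * s) / (3 * (s - ρ) ^ 2 + 1)

noncomputable def betaRat (ρ s : ℝ) : ℝ := -(3 * (s - ρ) ^ 2 + 1) / (12 * ρ * s)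

noncomputable def sigmaRat (ρ s : ℝ) : ℝ := (3 * (s - ρ) ^ 2 + 1) / (4 * ρ * s ^ 2)

section Rational

variable {S : ℝ → ℝ} {ρ : ℝ}

lemma hasDerivAt_thetaRat_comp (hρ : ρ ≠ 0) (hS0 : S ρ ≠ 0)
    (hS : HasDerivAt S ((3 * ρ ^ 2 + 1 - S ρ ^ 2) / (2 * ρ * S ρ)) ρ) :
    HasDerivAt (fun x => thetaRat x (S x))
      (sigmaRat ρ (S ρ) / 3 * ((thetaRat ρ (S ρ) + 1) / betaRat ρ (S ρ) +
        thetaRat ρ (S ρ) * ((3 * thetaRat ρ (S ρ) - 1) ^ 2 - 4))) ρ := by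
  have hD : 3 * (S ρ - ρ) ^ 2 + 1 ≠ 0 := by positivity
  have hx := hasDerivAt_id' ρ
  have := ((((hx.fun_pow 2).const_mul 3).add_const 1).fun_sub (hS.fun_pow 2) |>.fun_sub
    ((hx.const_mul 2).fun_mul hS)).fun_div ((((hS.fun_sub hx).fun_pow 2).const_mul 3).add_const 1) hD
  refine this.congr_deriv ?_
  simp only [thetaRat, betaRat, sigmaRat]
  field_simp
  ring

lemma hasDerivAt_betaRat_comp (hρ : ρ ≠ 0) (hS0 : S ρ ≠ 0)
    (hS : HasDerivAt S ((3 * ρ ^ 2 + 1 - S ρ ^ 2) / (2 * ρ * S ρ)) ρ) :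
    HasDerivAt (fun x => betaRat x (S x))
      (sigmaRat ρ (S ρ) / 3 * (2 - betaRat ρ (S ρ) * ((3 * thetaRat ρ (S ρ) - 1) ^ 2 + 2))) ρ := by
  have hD : 3 * (S ρ - ρ) ^ 2 + 1 ≠ 0 := by positivity
  have hx := hasDerivAt_id' ρ
  have := ((((hS.fun_sub hx).fun_pow 2).const_mul 3).add_const 1).fun_neg.fun_div
    ((hx.const_mul 12).fun_mul hS) (by simp [hρ, hS0])
  refine this.congr_deriv ?_
  simp only [thetaRat, betaRat, sigmaRat]
  field_simp
  ring

end Rational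

section Closed

variable {m ρ : ℝ}

lemma Vhp_pos_of_root_lt {ρp : ℝ} (hρp : 0 < ρp ∧ ρp ^ 3 + ρp - 2 * m = 0) (hρ : ρp < ρ) :
    0 < ρ ∧ 0 < Vhp m ρ := by
  obtain ⟨hρp0, hroot⟩ := hρp
  have hρ0 : 0 < ρ := hρp0.trans hρ
  have hcubic : 0 < ρ ^ 3 + ρ - 2 * m := by
    nlinarith [mul_pos (sub_pos.mpr hρ) (by positivity : 0 < ρ ^ 2 + ρ * ρp + ρp ^ 2)]
  have hV : Vhp m ρ = (ρ ^ 3 + ρ - 2 * m) / ρ := by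
    unfold Vhp; field_simp
  exact ⟨hρ0, hV ▸ div_pos hcubic hρ0⟩

lemma Vhp'_eq (hρ : ρ ≠ 0) : Vhp' m ρ = (3 * ρ ^ 2 + 1 - Vhp m ρ) / ρ := by
  unfold Vhp Vhp'; field_simp; ring

lemma hasDerivAt_Vhp (hρ : ρ ≠ 0) : HasDerivAt (Vhp m) (Vhp' m ρ) ρ := by
  have := (((hasDerivAt_id' ρ).fun_pow 2).add_const 1).fun_sub
    ((hasDerivAt_inv hρ).const_mul (2 * m))
  refine (this.congr_deriv ?_).congr_of_eventuallyEq (Eventually.of_forall fun x => ?_)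
  · unfold Vhp'; ring
  · unfold Vhp; ring

lemma hasDerivAt_sqrt_Vhp (hρ : ρ ≠ 0) (hV : 0 < Vhp m ρ) :
    HasDerivAt (fun x => √(Vhp m x))
      ((3 * ρ ^ 2 + 1 - √(Vhp m ρ) ^ 2) / (2 * ρ * √(Vhp m ρ))) ρ := by
  refine ((hasDerivAt_Vhp hρ).sqrt hV.ne').congr_deriv ?_
  rw [Vhp'_eq hρ, Real.sq_sqrt hV.le]
  field_simp

lemma thetaHP_eq (hρ : ρ ≠ 0) (hV : 0 ≤ Vhp m ρ) :
    thetaHP m ρ = √3 * thetaRat ρ (√(Vhp m ρ)) := by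
  have hs : Vhp m ρ = √(Vhp m ρ) ^ 2 := (Real.sq_sqrt hV).symm
  rw [thetaHP, thetaRat, Vhp'_eq hρ]
  generalize √(Vhp m ρ) = s at hs ⊢
  have hden : 4 * s ^ 2 + ρ * ((3 * ρ ^ 2 + 1 - s ^ 2) / ρ) - 6 * ρ * s =
      3 * (s - ρ) ^ 2 + 1 := by
    field_simp; ring
  have hD : 3 * (s - ρ) ^ 2 + 1 ≠ 0 := by positivity
  rw [hs, hden]
  field_simp

lemma betaHP_eq (hρ : ρ ≠ 0) (hV : 0 < Vhp m ρ) :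
    betaHP m ρ = betaRat ρ (√(Vhp m ρ)) := by
  have hs : Vhp m ρ = √(Vhp m ρ) ^ 2 := (Real.sq_sqrt hV.le).symm
  have hs0 : √(Vhp m ρ) ≠ 0 := (Real.sqrt_pos.mpr hV).ne'
  rw [betaHP, betaRat, Vhp'_eq hρ]
  generalize √(Vhp m ρ) = s at hs hs0 ⊢
  rw [hs]
  field_simp
  ring

lemma sigmaHP_eq (hρ : ρ ≠ 0) (hV : 0 < Vhp m ρ) :
    sigmaHP m ρ = sigmaRat ρ (√(Vhp m ρ)) := by
  have hs : Vhp m ρ = √(Vhp m ρ) ^ 2 := (Real.sq_sqrt hV.le).symm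
  have hs0 : √(Vhp m ρ) ≠ 0 := (Real.sqrt_pos.mpr hV).ne'
  rw [sigmaHP, sigmaRat, Vhp'_eq hρ]
  generalize √(Vhp m ρ) = s at hs hs0 ⊢
  rw [hs]
  field_simp
  ring

end Closed

lemma sqrt_three_mul_add_sq (u : ℝ) : (√3 * u + -1 / √3) ^ 2 = (3 * u - 1) ^ 2 / 3 := by
  have h3 : √3 ^ 2 = 3 := Real.sq_sqrt (by norm_num)
  have h0 : √3 ≠ 0 := by positivity
  have h : √3 * u + -1 / √3 = (3 * u - 1) / √3 := by
    field_simp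
    linear_combination u * h3
  rw [h, div_pow, h3]

lemma theta_orbit_rhs_eq (σ u b : ℝ) :
    √3 * (σ / 3 * ((u + 1) / b + u * ((3 * u - 1) ^ 2 - 4))) =
      σ * ((-1 / √3) / b * ((-1 / √3) * (√3 * u) - 1) +
        √3 * u * ((√3 * u + -1 / √3) ^ 2 - 4 / 3)) := by
  have h3 : √3 ^ 2 = 3 := Real.sq_sqrt (by norm_num)
  have h0 : √3 ≠ 0 := by positivity
  rw [sqrt_three_mul_add_sq]
  field_simp
  linear_combination σ * (u + 1) / b * h3

lemma beta_orbit_rhs_eq (σ u b : ℝ) :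
    σ / 3 * (2 - b * ((3 * u - 1) ^ 2 + 2)) =
      σ * (2 / 3 - b * ((√3 * u + -1 / √3) ^ 2 + 2 / 3)) := by
  rw [sqrt_three_mul_add_sq]
  ring

end HawkingPage

open HawkingPage Topology

theorem hawking_page_is_orbit (m : ℝ) (ρp : ℝ)
    (hρp : 0 < ρp ∧ ρp ^ 3 + ρp - 2 * m = 0) :
    ∀ ρ : ℝ, ρp < ρ →
      HasDerivAt (fun x => thetaHP m x)
        (sigmaHP m ρ *
          (((-1 / Real.sqrt 3) / betaHP m ρ) * ((-1 / Real.sqrt 3) * thetaHP m ρ - 1) +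
            thetaHP m ρ * ((thetaHP m ρ + (-1 / Real.sqrt 3)) ^ 2 - 4 / 3))) ρ ∧
      HasDerivAt (fun x => betaHP m x)
        (sigmaHP m ρ *
          (2 / 3 - betaHP m ρ * ((thetaHP m ρ + (-1 / Real.sqrt 3)) ^ 2 + 2 / 3))) ρ := by
  intro ρ hρ
  obtain ⟨hρ0, hV⟩ := Vhp_pos_of_root_lt hρp hρ
  have hS := hasDerivAt_sqrt_Vhp hρ0.ne' hV
  have hS0 : √(Vhp m ρ) ≠ 0 := (Real.sqrt_pos.mpr hV).ne'
  have hnear : ∀ᶠ x in 𝓝 ρ, 0 < x ∧ 0 < Vhp m x :=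
    (lt_mem_nhds hρ).mono fun x hx => Vhp_pos_of_root_lt hρp hx
  rw [thetaHP_eq hρ0.ne' hV.le, betaHP_eq hρ0.ne' hV, sigmaHP_eq hρ0.ne' hV]
  constructor
  · exact (((hasDerivAt_thetaRat_comp hρ0.ne' hS0 hS).const_mul √3).congr_of_eventuallyEq
      (hnear.mono fun x hx => thetaHP_eq hx.1.ne' hx.2.le)).congr_deriv
      (theta_orbit_rhs_eq _ _ _)
  · exact ((hasDerivAt_betaRat_comp hρ0.ne' hS0 hS).congr_of_eventuallyEq
      (hnear.mono fun x hx => betaHP_eq hx.1.ne' hx.2)).congr_deriv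
      (beta_orbit_rhs_eq _ _ _)
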